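/- Reduction to the semi-double cover: for any directed weighted graph G and any disjoint sets L, R ⊆ V with vol_out(L) + vol_in(R) > 0, the flow ratio from L to R in G equals the conductance of L_1 ∪ R_2 in the semi-double cover H: F_G(L, R) = Φ_H(L_1 ∪ R_2). Likewise, if T ⊆ V×{1,2} is simple (for every v ∈ V at most one of v_1, v_2 lies in T), then with L = {u : u_1 ∈ T} and R = {u : u_2 ∈ T}, F_G(L, R) = Φ_H(T). -/
import Mathlib


open Finset

/-- The volume of a vertex set: the sum of the degrees of its vertices. -/
noncomputable def gVol {V : Type*} (deg : V → ℝ) (S : Finset V) : ℝ := ∑ u ∈ S, deg u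

/-- The total (directed) edge weight from `A` to `B`. -/
noncomputable def gCut {V : Type*} (w : V → V → ℝ) (A B : Finset V) : ℝ :=
  ∑ u ∈ A, ∑ v ∈ B, w u v

/-- The conductance `Φ(T) = w(T, Tᶜ)/vol(T)` of a vertex set. -/
noncomputable def gCondVol {V : Type*} [Fintype V] [DecidableEq V]
    (w : V → V → ℝ) (deg : V → ℝ) (T : Finset V) : ℝ :=
  gCut w T Tᶜ / gVol deg T

/-- The out-volume of a set in a directed graph. -/
noncomputable def volOut {V : Type*} [Fintype V] (w : V → V → ℝ) (L : Finset V) : ℝ :=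
  ∑ u ∈ L, ∑ v, w u v

/-- The in-volume of a set in a directed graph. -/
noncomputable def volIn {V : Type*} [Fintype V] (w : V → V → ℝ) (R : Finset V) : ℝ :=
  ∑ v ∈ R, ∑ u, w u v

/-- The flow ratio `F(L, R) = 1 - 2w(L,R)/(vol_out(L) + vol_in(R))` of a directed graph. -/
noncomputable def flowRatio {V : Type*} [Fintype V] (w : V → V → ℝ) (L R : Finset V) : ℝ :=
  1 - 2 * gCut w L R / (volOut w L + volIn w R)

/-- The edge weights of the semi-double cover of a directed graph: the vertex `(v, false)`
plays the role of `v₁` and `(v, true)` plays the role of `v₂`; every directed edge `(u, v)`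
gives rise to the single undirected edge `{u₁, v₂}` of the same weight. -/
noncomputable def sdcWeight {V : Type*} (w : V → V → ℝ) : V × Bool → V × Bool → ℝ :=
  fun x y =>
    if x.2 = false ∧ y.2 = true then w x.1 y.1
    else if x.2 = true ∧ y.2 = false then w y.1 x.1
    else 0

/-- **Reduction to the semi-double cover** (Lemma 6.13): the flow ratio from `L` to `R` in a
directed graph `G` equals the conductance of `L₁ ∪ R₂` in the semi-double cover `H`, and,
conversely, every simple set `T` in `H` yields a pair `(L, R)` whose flow ratio equals the
conductance of `T`. -/
theorem semi_double_cover_conductance_eq_flow_ratio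
    {V : Type*} [Fintype V] [DecidableEq V]
    (w : V → V → ℝ)
    (hnonneg : ∀ u v, 0 ≤ w u v)
    -- the degrees in the semi-double cover
    (degH : V × Bool → ℝ) (hdegH : ∀ x, degH x = ∑ y, sdcWeight w x y) :
    (∀ L R : Finset V, Disjoint L R → 0 < volOut w L + volIn w R →
      flowRatio w L R =
        gCondVol (sdcWeight w) degH
          (L.image (fun v => (v, false)) ∪ R.image (fun v => (v, true)))) ∧
    (∀ T : Finset (V × Bool), (∀ v : V, ¬((v, false) ∈ T ∧ (v, true) ∈ T)) →
      0 < gVol degH T →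
      flowRatio w (Finset.univ.filter (fun u => (u, false) ∈ T))
          (Finset.univ.filter (fun u => (u, true) ∈ T)) =
        gCondVol (sdcWeight w) degH T) := by

  have key : ∀ L R : Finset V, Disjoint L R → 0 < volOut w L + volIn w R →
      flowRatio w L R =
        gCondVol (sdcWeight w) degH
          (L.image (fun v => (v, false)) ∪ R.image (fun v => (v, true))) := by
    intro L R hLR hpos
    set T : Finset (V × Bool) :=
      L.image (fun v => (v, false)) ∪ R.image (fun v => (v, true)) with hT
    have hdisjim : Disjoint (L.image (fun v : V => (v, false)))
        (R.image (fun v : V => (v, true))) := by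
      simp [Finset.disjoint_left, Finset.mem_image]
    have hdegF : ∀ u : V, degH (u, false) = ∑ v, w u v := by
      intro u
      rw [hdegH]
      rw [Fintype.sum_prod_type]
      simp [sdcWeight]
    have hdegT : ∀ u : V, degH (u, true) = ∑ v, w v u := by
      intro u
      rw [hdegH]
      rw [Fintype.sum_prod_type]
      simp [sdcWeight]
    have hvol : gVol degH T = volOut w L + volIn w R := by
      rw [hT]
      unfold gVol volOut volIn
      rw [Finset.sum_union hdisjim, Finset.sum_image (by simp),
        Finset.sum_image (by simp)]
      congr 1
      · exact Finset.sum_congr rfl fun u _ => hdegF u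
      · exact Finset.sum_congr rfl fun u _ => hdegT u
    have hcutTT : gCut (sdcWeight w) T T = 2 * gCut w L R := by
      rw [hT]
      unfold gCut
      rw [Finset.sum_union hdisjim, Finset.sum_image (by simp),
        Finset.sum_image (by simp)]
      have h1 : ∀ u : V, ∑ y ∈ (L.image (fun v : V => (v, false)) ∪
          R.image (fun v : V => (v, true))), sdcWeight w (u, false) y
          = ∑ v ∈ R, w u v := by
        intro u
        rw [Finset.sum_union hdisjim, Finset.sum_image (by simp),
          Finset.sum_image (by simp)]
        simp [sdcWeight]
      have h2 : ∀ u : V, ∑ y ∈ (L.image (fun v : V => (v, false)) ∪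
          R.image (fun v : V => (v, true))), sdcWeight w (u, true) y
          = ∑ v ∈ L, w v u := by
        intro u
        rw [Finset.sum_union hdisjim, Finset.sum_image (by simp),
          Finset.sum_image (by simp)]
        simp [sdcWeight]
      rw [Finset.sum_congr rfl fun u _ => h1 u,
        Finset.sum_congr rfl fun u _ => h2 u]
      rw [Finset.sum_comm]
      ring
    have hcutTc : gCut (sdcWeight w) T Tᶜ = gVol degH T - gCut (sdcWeight w) T T := by
      unfold gCut gVol
      rw [← Finset.sum_sub_distrib]
      refine Finset.sum_congr rfl fun x _ => ?_
      rw [hdegH x, ← Finset.sum_add_sum_compl T (sdcWeight w x)]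
      ring
    have hs : volOut w L + volIn w R ≠ 0 := ne_of_gt hpos
    unfold gCondVol flowRatio
    rw [hcutTc, hcutTT, hvol]
    field_simp
  constructor
  · exact key
  · intro T hsimple hposT
    set L : Finset V := Finset.univ.filter (fun u => (u, false) ∈ T) with hL
    set R : Finset V := Finset.univ.filter (fun u => (u, true) ∈ T) with hR
    have hTeq : T = L.image (fun v => (v, false)) ∪ R.image (fun v => (v, true)) := by
      ext ⟨v, b⟩
      cases b <;> simp [hL, hR, Finset.mem_image]
    have hdisj : Disjoint L R := by
      rw [Finset.disjoint_left]
      intro a ha hb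
      exact hsimple a ⟨by simpa [hL] using ha, by simpa [hR] using hb⟩
    have hpos : 0 < volOut w L + volIn w R := by
      by_contra h
      push_neg at h
      -- reuse volume computation
      have hdisjim : Disjoint (L.image (fun v : V => (v, false)))
          (R.image (fun v : V => (v, true))) := by
        simp [Finset.disjoint_left, Finset.mem_image]
      have hdegF : ∀ u : V, degH (u, false) = ∑ v, w u v := by
        intro u
        rw [hdegH]
        rw [Fintype.sum_prod_type]
        simp [sdcWeight]
      have hdegT : ∀ u : V, degH (u, true) = ∑ v, w v u := by
        intro u
        rw [hdegH]
        rw [Fintype.sum_prod_type]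
        simp [sdcWeight]
      have hvol : gVol degH T = volOut w L + volIn w R := by
        rw [hTeq]
        unfold gVol volOut volIn
        rw [Finset.sum_union hdisjim, Finset.sum_image (by simp),
          Finset.sum_image (by simp)]
        congr 1
        · exact Finset.sum_congr rfl fun u _ => hdegF u
        · exact Finset.sum_congr rfl fun u _ => hdegT u
      rw [hvol] at hposT
      exact absurd hposT (not_lt.mpr h)
    exact (key L R hdisj hpos).trans (by rw [← hTeq])
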